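/- Let n ∈ ℕ and let z₁, z₂ ∈ ℂ satisfy |z₁|² + |z₂|² = 1. Define the vector ψ ∈ ℂ^{n+1} by ψ_k = √C(n,k) · z₁^{n−k} · z₂^{k} for k ∈ {0,…,n}, and the real numbers n_x = 2·Re(conj(z₁)·z₂), n_y = 2·Im(conj(z₁)·z₂), n_z = |z₁|² − |z₂|². Then (n_x, n_y, n_z) is a unit vector, and ψ is an eigenvector of the matrix n_x·J_x + n_y·J_y + n_z·J_z with eigenvalue n/2: (n_x J_x + n_y J_y + n_z J_z)·ψ = (n/2)·ψ. That is, the explicitly parameterized vector ψ is the spin coherent state along (n_x, n_y, n_z), i.e., the eigenstate of maximal eigenvalue n/2 of the spin component along that direction. -/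

import Mathlib

/-!
With `w = conj z₁ * z₂`, the combination `n_x J_x + n_y J_y` is `conj w` times the superdiagonal
ladder matrix plus `w` times the subdiagonal one. Against the weights `√C(n,k)` the ladder
coefficient `√((k+1)(n-k))` trades via `C(n,k+1)(k+1) = C(n,k)(n-k)`, so in row `k` the two ladder
terms contribute `|z₂|²(n-k) ψ_k` and `|z₁|² k ψ_k`; adding `n_z (n/2 - k) ψ_k` gives
`(n/2)(|z₁|² + |z₂|²) ψ_k`. The unit-vector claim is the identity
`|2 conj z₁ z₂|² + (|z₁|² - |z₂|²)² = (|z₁|² + |z₂|²)²` behind the Hopf map.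
-/

open Matrix Finset

/-- The spin matrix `J_x` for spin `j = n/2` (rows/columns indexed by `k = j − m ∈ {0,…,n}`):
`(J_x)_{k,k+1} = (J_x)_{k+1,k} = (1/2)√((k+1)(n−k))`, all other entries zero. -/
noncomputable def Jx (n : ℕ) : Matrix (Fin (n + 1)) (Fin (n + 1)) ℂ :=
  Matrix.of fun k' k =>
    if (k : ℕ) = (k' : ℕ) + 1 then
      ((1 / 2 : ℝ) * Real.sqrt (((k' : ℕ) + 1 : ℝ) * ((n : ℝ) - (k' : ℕ))) : ℂ)
    else if (k' : ℕ) = (k : ℕ) + 1 then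
      ((1 / 2 : ℝ) * Real.sqrt (((k : ℕ) + 1 : ℝ) * ((n : ℝ) - (k : ℕ))) : ℂ)
    else 0

/-- The spin matrix `J_y` for spin `j = n/2`:
`(J_y)_{k,k+1} = −(i/2)√((k+1)(n−k))`, `(J_y)_{k+1,k} = (i/2)√((k+1)(n−k))`,
all other entries zero. -/
noncomputable def Jy (n : ℕ) : Matrix (Fin (n + 1)) (Fin (n + 1)) ℂ :=
  Matrix.of fun k' k =>
    if (k : ℕ) = (k' : ℕ) + 1 then
      -(Complex.I / 2) * (Real.sqrt (((k' : ℕ) + 1 : ℝ) * ((n : ℝ) - (k' : ℕ))) : ℂ)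
    else if (k' : ℕ) = (k : ℕ) + 1 then
      (Complex.I / 2) * (Real.sqrt (((k : ℕ) + 1 : ℝ) * ((n : ℝ) - (k : ℕ))) : ℂ)
    else 0

/-- The spin matrix `J_z` for spin `j = n/2`: diagonal with entries `n/2 − k`. -/
noncomputable def Jz (n : ℕ) : Matrix (Fin (n + 1)) (Fin (n + 1)) ℂ :=
  Matrix.diagonal fun k => ((n : ℂ) / 2 - (k : ℕ))

open Complex ComplexConjugate

noncomputable def spinLadderCoeff (n k : ℕ) : ℝ := √((k + 1 : ℝ) * ((n : ℝ) - k))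

lemma cast_choose_succ_mul {n k : ℕ} (hk : k ≤ n) :
    (n.choose (k + 1) : ℝ) * (k + 1) = n.choose k * (n - k) := by
  rw [← Nat.cast_sub hk]
  exact_mod_cast Nat.choose_succ_right_eq n k

lemma spinLadderCoeff_mul_sqrt_choose_succ {n k : ℕ} (hk : k ≤ n) :
    spinLadderCoeff n k * √(n.choose (k + 1)) = (n - k) * √(n.choose k) := by
  have hnk : (0 : ℝ) ≤ n - k := sub_nonneg.2 (by exact_mod_cast hk)
  calc spinLadderCoeff n k * √(n.choose (k + 1))
      = √((k + 1) * (n - k) * n.choose (k + 1)) := (Real.sqrt_mul (by positivity) _).symm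
    _ = √((n - k) ^ 2 * n.choose k) := by
      congr 1; linear_combination (n - k : ℝ) * cast_choose_succ_mul hk
    _ = (n - k) * √(n.choose k) := by rw [Real.sqrt_mul (sq_nonneg _), Real.sqrt_sq hnk]

lemma spinLadderCoeff_mul_sqrt_choose {n k : ℕ} (hk : k ≤ n) :
    spinLadderCoeff n k * √(n.choose k) = (k + 1) * √(n.choose (k + 1)) := by
  have hnk : (0 : ℝ) ≤ n - k := sub_nonneg.2 (by exact_mod_cast hk)
  calc spinLadderCoeff n k * √(n.choose k)
      = √((k + 1) * (n - k) * n.choose k) := (Real.sqrt_mul (by positivity) _).symm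
    _ = √((k + 1) ^ 2 * n.choose (k + 1)) := by
      congr 1; linear_combination (-(k + 1) : ℝ) * cast_choose_succ_mul hk
    _ = (k + 1) * √(n.choose (k + 1)) := by
      rw [Real.sqrt_mul (sq_nonneg _), Real.sqrt_sq (by positivity)]

lemma smul_Jx_add_smul_Jy_add_smul_Jz_apply (n : ℕ) (w c : ℂ) (i j : Fin (n + 1)) :
    (((2 * w.re : ℝ) : ℂ) • Jx n + ((2 * w.im : ℝ) : ℂ) • Jy n + c • Jz n) i j =
      (if (j : ℕ) = i + 1 then conj w * spinLadderCoeff n i else 0) +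
      (if (i : ℕ) = j + 1 then w * spinLadderCoeff n j else 0) +
      (if (i : ℕ) = j then c * (n / 2 - i) else 0) := by
  simp only [Jx, Jy, Jz, Matrix.add_apply, Matrix.smul_apply, of_apply, diagonal_apply,
    Fin.ext_iff, smul_eq_mul, spinLadderCoeff]
  split_ifs <;> first | omega | (apply Complex.ext <;> simp <;> ring)

/-- Indexed by `ℕ` so that the neighbours `k ± 1` need no `Fin` arithmetic; it vanishes from
`n + 1` on. -/
noncomputable def coherentState (n : ℕ) (z₁ z₂ : ℂ) (k : ℕ) : ℂ :=
  (√(n.choose k : ℝ) : ℂ) * z₁ ^ (n - k) * z₂ ^ k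

section coherentState

variable {n k : ℕ} {z₁ z₂ : ℂ}

lemma coherentState_succ_self : coherentState n z₁ z₂ (n + 1) = 0 := by
  simp [coherentState]

lemma mul_conj_mul_spinLadderCoeff_mul_coherentState_succ (hk : k ≤ n) :
    z₁ * conj z₂ * spinLadderCoeff n k * coherentState n z₁ z₂ (k + 1) =
      ‖z₂‖ ^ 2 * (n - k) * coherentState n z₁ z₂ k := by
  obtain hk | rfl := hk.lt_or_eq
  · have hs := congrArg ((↑) : ℝ → ℂ) (spinLadderCoeff_mul_sqrt_choose_succ hk.le)
    push_cast at hs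
    rw [coherentState, coherentState, Nat.sub_add_eq,
      ← pow_sub_one_mul (Nat.sub_ne_zero_of_lt hk) z₁]
    linear_combination (z₁ * conj z₂ * z₁ ^ (n - k - 1) * z₂ ^ (k + 1)) * hs +
      ((n - k) * (√(n.choose k : ℝ) : ℂ) * z₁ ^ (n - k - 1) * z₁ * z₂ ^ k) * conj_mul' z₂
  · simp [coherentState_succ_self]

lemma conj_mul_mul_spinLadderCoeff_mul_coherentState (hk : k < n) :
    conj z₁ * z₂ * spinLadderCoeff n k * coherentState n z₁ z₂ k =
      ‖z₁‖ ^ 2 * (k + 1) * coherentState n z₁ z₂ (k + 1) := by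
  have hs := congrArg ((↑) : ℝ → ℂ) (spinLadderCoeff_mul_sqrt_choose hk.le)
  push_cast at hs
  rw [coherentState, coherentState, Nat.sub_add_eq,
    ← pow_sub_one_mul (Nat.sub_ne_zero_of_lt hk) z₁]
  linear_combination (conj z₁ * z₁ * z₁ ^ (n - k - 1) * z₂ ^ (k + 1)) * hs +
    ((k + 1) * (√(n.choose (k + 1) : ℝ) : ℂ) * z₁ ^ (n - k - 1) * z₂ ^ (k + 1)) * conj_mul' z₁

lemma mulVec_coherentState_apply (c : ℂ) (i : Fin (n + 1)) :
    ((((2 * (conj z₁ * z₂).re : ℝ) : ℂ) • Jx n + ((2 * (conj z₁ * z₂).im : ℝ) : ℂ) • Jy n +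
        c • Jz n) *ᵥ fun k => coherentState n z₁ z₂ k) i =
      (‖z₂‖ ^ 2 * (n - i) + ‖z₁‖ ^ 2 * i + c * (n / 2 - i)) * coherentState n z₁ z₂ i := by
  set Ψ := coherentState n z₁ z₂
  obtain ⟨m, hm⟩ := i
  have hmn : m ≤ n := Nat.lt_succ_iff.1 hm
  have hlower : ∑ k ∈ range (n + 1),
      (if k = m + 1 then conj (conj z₁ * z₂) * spinLadderCoeff n m else 0) * Ψ k =
        ‖z₂‖ ^ 2 * (n - m) * Ψ m := by
    simp only [ite_mul, zero_mul, sum_ite_eq', mem_range, map_mul, conj_conj]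
    rw [← mul_conj_mul_spinLadderCoeff_mul_coherentState_succ hmn]
    split_ifs
    · rfl
    · obtain rfl : m = n := by omega
      simp [coherentState_succ_self]
  have hraise : ∑ k ∈ range (n + 1),
      (if m = k + 1 then conj z₁ * z₂ * spinLadderCoeff n k else 0) * Ψ k = ‖z₁‖ ^ 2 * m * Ψ m := by
    cases m with
    | zero => simp
    | succ j =>
      simp only [add_left_inj, ite_mul, zero_mul, sum_ite_eq, mem_range]
      rw [if_pos (by omega)]
      push_cast
      exact conj_mul_mul_spinLadderCoeff_mul_coherentState (by omega)
  simp only [mulVec, dotProduct, smul_Jx_add_smul_Jy_add_smul_Jz_apply]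
  rw [Fin.sum_univ_eq_sum_range (fun k =>
    ((if k = m + 1 then conj (conj z₁ * z₂) * spinLadderCoeff n m else 0) +
      (if m = k + 1 then conj z₁ * z₂ * spinLadderCoeff n k else 0) +
      (if m = k then c * (n / 2 - m) else 0)) * Ψ k)]
  simp only [add_mul, sum_add_distrib]
  rw [hlower, hraise]
  simp only [ite_mul, zero_mul, sum_ite_eq, mem_range, if_pos hm]

end coherentState

lemma sq_two_mul_re_add_sq_two_mul_im_add_sq_sub (z₁ z₂ : ℂ) :
    (2 * (conj z₁ * z₂).re) ^ 2 + (2 * (conj z₁ * z₂).im) ^ 2 + (‖z₁‖ ^ 2 - ‖z₂‖ ^ 2) ^ 2 =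
      (‖z₁‖ ^ 2 + ‖z₂‖ ^ 2) ^ 2 := by
  have h := Complex.sq_norm (conj z₁ * z₂)
  rw [normSq_apply, norm_mul, norm_conj, mul_pow] at h
  linear_combination -4 * h

theorem coherent_state_eigenvector (n : ℕ) (z₁ z₂ : ℂ)
    (h : ‖z₁‖ ^ 2 + ‖z₂‖ ^ 2 = 1)
    (ψ : Fin (n + 1) → ℂ)
    (hψ : ∀ k : Fin (n + 1),
      ψ k = (Real.sqrt (n.choose (k : ℕ) : ℝ) : ℂ) * z₁ ^ (n - (k : ℕ)) * z₂ ^ (k : ℕ))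
    (nx ny nz : ℝ)
    (hx : nx = 2 * (starRingEnd ℂ z₁ * z₂).re)
    (hy : ny = 2 * (starRingEnd ℂ z₁ * z₂).im)
    (hz : nz = ‖z₁‖ ^ 2 - ‖z₂‖ ^ 2) :
    nx ^ 2 + ny ^ 2 + nz ^ 2 = 1 ∧
      ((nx : ℂ) • Jx n + (ny : ℂ) • Jy n + (nz : ℂ) • Jz n).mulVec ψ =
        ((n : ℂ) / 2) • ψ := by
  subst hx hy hz
  obtain rfl : ψ = fun k : Fin (n + 1) => coherentState n z₁ z₂ k := funext hψ
  refine ⟨by rw [sq_two_mul_re_add_sq_two_mul_im_add_sq_sub, h, one_pow], ?_⟩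
  ext i
  have hC : (‖z₁‖ : ℂ) ^ 2 + (‖z₂‖ : ℂ) ^ 2 = 1 := by exact_mod_cast h
  rw [mulVec_coherentState_apply, Pi.smul_apply, smul_eq_mul]
  push_cast
  linear_combination (n / 2 * coherentState n z₁ z₂ i) * hC
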